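/- arXiv:2511.05096 — 2 statements merged into one kernel-verified Lean document; each statement's English description precedes it below -/
import Mathlib

section
/- Let 0 < V < ∞ and 0 < W ≤ ∞. There is a constant c > 0 depending only on V and W (one may take c = ((V/W)(2^{W/V} − 1))^{1/W} when W < ∞ and c = 1 when W = ∞) such that for every measurable function f on (0,∞) and every t > 0 one has (H_{(V,W)}f)(t) ≥ c f^*(2t). -/
open MeasureTheory Set Filter
open scoped ENNReal NNReal

noncomputable section

/-- The non-increasing rearrangement of a function on `(0, ∞)` (with Lebesgue measure):
`f^*(t) = inf {λ : |{s > 0 : |f(s)| > λ}| ≤ t}`. -/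
def rearr (f : ℝ → ℝ) (t : ℝ) : ℝ≥0∞ :=
  sInf {lam : ℝ≥0∞ |
    volume {s : ℝ | 0 < s ∧ lam < ENNReal.ofReal |f s|} ≤ ENNReal.ofReal t}

/-- The averaging operator `H_{(V,W)}` (for `W = ⊤` this is `H_{(V,∞)}`):
`(H_{(V,W)}f)(t) = t^{-1/V} (∫_t^∞ (v^{1/V} f^*(v))^W dv/v)^{1/W}`,
`(H_{(V,∞)}f)(t) = t^{-1/V} sup_{v>t} v^{1/V} f^*(v)`. -/
def avgHlow (V : ℝ) (W : ℝ≥0∞) (f : ℝ → ℝ) (t : ℝ) : ℝ≥0∞ :=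
  if W = ⊤ then
    ENNReal.ofReal (t ^ (-(1 / V))) *
      ⨆ v ∈ Set.Ioi t, ENNReal.ofReal (v ^ (1 / V)) * rearr f v
  else
    ENNReal.ofReal (t ^ (-(1 / V))) *
      (∫⁻ v in Set.Ioi t,
          (ENNReal.ofReal (v ^ (1 / V)) * rearr f v) ^ W.toReal / ENNReal.ofReal v) ^
        (1 / W.toReal)

lemma rearr_anti (f : ℝ → ℝ) {a b : ℝ} (hab : a ≤ b) : rearr f b ≤ rearr f a := by
  apply sInf_le_sInf
  intro lam hl
  exact hl.trans (ENNReal.ofReal_le_ofReal hab)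

/-- Let `0 < V < ∞` and `0 < W ≤ ∞`. There is a constant `c > 0` depending only on `V` and
`W` such that for every measurable `f` on `(0,∞)` and every `t > 0`,
`(H_{(V,W)}f)(t) ≥ c f^*(2t)`. -/
theorem stmt2 (V : ℝ) (hV : 0 < V) (W : ℝ≥0∞) (hW : 0 < W) :
    ∃ c : ℝ, 0 < c ∧ ∀ f : ℝ → ℝ, Measurable f → ∀ t : ℝ, 0 < t →
      ENNReal.ofReal c * rearr f (2 * t) ≤ avgHlow V W f t := by
  have hVinv : (0:ℝ) ≤ 1 / V := by positivity
  by_cases hWt : W = ⊤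
  · refine ⟨1, one_pos, ?_⟩
    intro f hf t ht
    rw [avgHlow, if_pos hWt]
    have h2t : (0:ℝ) < 2 * t := by linarith
    have hv : (2*t) ∈ Set.Ioi t := by simp only [Set.mem_Ioi]; linarith
    have key : ENNReal.ofReal ((2*t) ^ (1/V)) * rearr f (2*t) ≤
        ⨆ v ∈ Set.Ioi t, ENNReal.ofReal (v ^ (1 / V)) * rearr f v :=
      le_iSup₂ (f := fun v (_ : v ∈ Set.Ioi t) => ENNReal.ofReal (v ^ (1 / V)) * rearr f v)
        (2*t) hv
    calc ENNReal.ofReal 1 * rearr f (2*t)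
        = ENNReal.ofReal (t ^ (-(1/V))) * (ENNReal.ofReal (t ^ (1/V)) * rearr f (2*t)) := by
          rw [← mul_assoc, ← ENNReal.ofReal_mul (by positivity),
            ← Real.rpow_add ht, neg_add_cancel, Real.rpow_zero]
      _ ≤ ENNReal.ofReal (t ^ (-(1/V))) * (ENNReal.ofReal ((2*t) ^ (1/V)) * rearr f (2*t)) := by
          gcongr
          linarith
      _ ≤ _ := by gcongr
  · set w := W.toReal with hw_def
    have hw : 0 < w := ENNReal.toReal_pos hW.ne' hWt
    refine ⟨(1/2 : ℝ) ^ (1/w), by positivity, ?_⟩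
    intro f hf t ht
    rw [avgHlow, if_neg hWt]
    have h2t : (0:ℝ) < 2 * t := by linarith
    have hone : ENNReal.ofReal (t ^ (-(1/V))) * ENNReal.ofReal (t ^ (1/V)) = 1 := by
      rw [← ENNReal.ofReal_mul (by positivity), ← Real.rpow_add ht, neg_add_cancel,
        Real.rpow_zero, ENNReal.ofReal_one]
    set X := ENNReal.ofReal (t ^ (1/V)) * rearr f (2*t) with hX
    set C := X ^ w / ENNReal.ofReal (2*t) with hC
    have hIoo : Set.Ioo t (2*t) ⊆ Set.Ioi t := Set.Ioo_subset_Ioi_self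
    have step1 : C * ENNReal.ofReal t ≤
        ∫⁻ v in Set.Ioi t,
          (ENNReal.ofReal (v ^ (1 / V)) * rearr f v) ^ w / ENNReal.ofReal v := by
      calc C * ENNReal.ofReal t
          = ∫⁻ _ in Set.Ioo t (2*t), C := by
            rw [setLIntegral_const, Real.volume_Ioo]
            congr 2
            ring
        _ ≤ ∫⁻ v in Set.Ioo t (2*t),
              (ENNReal.ofReal (v ^ (1 / V)) * rearr f v) ^ w / ENNReal.ofReal v := by
            apply setLIntegral_mono' measurableSet_Ioo
            intro v hv
            rw [hC, hX]
            gcongr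
            · exact hv.1.le
            · exact rearr_anti f hv.2.le
            · exact hv.2.le
        _ ≤ _ := lintegral_mono_set hIoo
    have hhalf : t / (2*t) = 1/2 := by
      field_simp
    have hdiv : C * ENNReal.ofReal t = X ^ w * ENNReal.ofReal (1/2 : ℝ) := by
      rw [hC, div_eq_mul_inv, mul_assoc, mul_comm (ENNReal.ofReal (2*t))⁻¹,
        ← div_eq_mul_inv, ← ENNReal.ofReal_div_of_pos h2t, hhalf]
    have step2 : (C * ENNReal.ofReal t) ^ (1/w) =
        X * ENNReal.ofReal ((1/2 : ℝ) ^ (1/w)) := by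
      rw [hdiv, ENNReal.mul_rpow_of_nonneg _ _ (by positivity), ← ENNReal.rpow_mul,
        mul_one_div, div_self hw.ne', ENNReal.rpow_one,
        ENNReal.ofReal_rpow_of_pos (by norm_num)]
    calc ENNReal.ofReal ((1/2:ℝ) ^ (1/w)) * rearr f (2*t)
        = (ENNReal.ofReal (t ^ (-(1/V))) * ENNReal.ofReal (t ^ (1/V))) *
            (ENNReal.ofReal ((1/2:ℝ) ^ (1/w)) * rearr f (2*t)) := by rw [hone, one_mul]
      _ = ENNReal.ofReal (t ^ (-(1/V))) * (X * ENNReal.ofReal ((1/2:ℝ) ^ (1/w))) := by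
          rw [hX]; ring
      _ = ENNReal.ofReal (t ^ (-(1/V))) * (C * ENNReal.ofReal t) ^ (1/w) := by rw [step2]
      _ ≤ _ := mul_le_mul_right (ENNReal.rpow_le_rpow step1 (by positivity)) _
end
end

section
/- Let E be a rearrangement-invariant quasi-Banach function space on (0,∞) with lower Boyd index p_E, and let 0 < U < p_E and 0 < W ≤ ∞. Then there exist constants c, C > 0 such that for all measurable f on (0,∞): c ρ_E(f^*) ≤ ρ_E(H^{(U,W)}f) ≤ C ρ_E(f^*); in particular ‖f‖_E and ρ_E(H^{(U,W)}f) are equivalent. -/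
open MeasureTheory Set Filter
open scoped ENNReal NNReal

noncomputable section

/-- A rearrangement-invariant quasi-Banach function space on `(0,∞)`, given by the
functional `ρ` on (extended-)nonnegative measurable functions on `(0,∞)`. -/
structure RIQBFS where
  ρ : (ℝ → ℝ≥0∞) → ℝ≥0∞
  C : ℝ
  one_le_C : 1 ≤ C
  eq_zero_iff : ∀ f : ℝ → ℝ≥0∞, ρ f = 0 ↔ f =ᵐ[volume.restrict (Set.Ioi (0 : ℝ))] 0
  smul_eq : ∀ (c : ℝ≥0) (f : ℝ → ℝ≥0∞), ρ (fun t => (c : ℝ≥0∞) * f t) = (c : ℝ≥0∞) * ρ f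
  quasi_triangle : ∀ f g : ℝ → ℝ≥0∞, ρ (fun t => f t + g t) ≤ ENNReal.ofReal C * (ρ f + ρ g)
  mono : ∀ f g : ℝ → ℝ≥0∞,
    (∀ᵐ t ∂(volume.restrict (Set.Ioi (0 : ℝ))), g t ≤ f t) → ρ g ≤ ρ f
  fatou : ∀ (fn : ℕ → ℝ → ℝ≥0∞) (f : ℝ → ℝ≥0∞),
    (∀ n, ∀ᵐ t ∂(volume.restrict (Set.Ioi (0 : ℝ))), fn n t ≤ fn (n + 1) t) →
    (∀ᵐ t ∂(volume.restrict (Set.Ioi (0 : ℝ))),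
      Filter.Tendsto (fun n => fn n t) Filter.atTop (nhds (f t))) →
    Filter.Tendsto (fun n => ρ (fn n)) Filter.atTop (nhds (ρ f))
  indicator_finite : ∀ ω : Set ℝ, MeasurableSet ω → ω ⊆ Set.Ioi (0 : ℝ) → volume ω < ⊤ →
    ρ (Set.indicator ω fun _ => 1) < ⊤

/-- The quasi-norm of the space `E`: `‖f‖_E = ρ_E (f^*)`. -/
def RIQBFS.normE (E : RIQBFS) (f : ℝ → ℝ) : ℝ≥0∞ := E.ρ (rearr f)

/-- The operator norm of the dilation operator `(D_a f)(t) = f (a t)` on `E`. -/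
def dilNorm (E : RIQBFS) (a : ℝ) : ℝ≥0∞ :=
  ⨆ (f : ℝ → ℝ) (_ : Measurable f) (_ : E.normE f ≤ 1), E.normE fun t => f (a * t)

/-- The lower Boyd index
`p_E = sup {p > 0 : ∃ c > 0, ∀ 0 < a < 1, ‖D_a‖ ≤ c a^{-1/p}}` (an element of `(0, ∞]`). -/
def lowerBoyd (E : RIQBFS) : ℝ≥0∞ :=
  sSup (ENNReal.ofReal ''
    {p : ℝ | 0 < p ∧ ∃ c : ℝ, 0 < c ∧ ∀ a : ℝ, 0 < a → a < 1 →
      dilNorm E a ≤ ENNReal.ofReal (c * a ^ (-(1 / p)))})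

/-- The upper Boyd index
`q_E = inf {q > 0 : ∃ c > 0, ∀ a ≥ 1, ‖D_a‖ ≤ c a^{-1/q}}` (an element of `(0, ∞]`,
with `inf ∅ = ∞`). -/
def upperBoyd (E : RIQBFS) : ℝ≥0∞ :=
  sInf (ENNReal.ofReal ''
    {q : ℝ | 0 < q ∧ ∃ c : ℝ, 0 < c ∧ ∀ a : ℝ, 1 ≤ a →
      dilNorm E a ≤ ENNReal.ofReal (c * a ^ (-(1 / q)))})

/-- The averaging operator `H^{(U,W)}` (for `W = ⊤` this is `H^{(U,∞)}`):
`(H^{(U,W)}f)(t) = t^{-1/U} (∫_0^t (v^{1/U} f^*(v))^W dv/v)^{1/W}`,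
`(H^{(U,∞)}f)(t) = t^{-1/U} sup_{0<v<t} v^{1/U} f^*(v)`. -/
def avgH (U : ℝ) (W : ℝ≥0∞) (f : ℝ → ℝ) (t : ℝ) : ℝ≥0∞ :=
  if W = ⊤ then
    ENNReal.ofReal (t ^ (-(1 / U))) *
      ⨆ v ∈ Set.Ioo (0 : ℝ) t, ENNReal.ofReal (v ^ (1 / U)) * rearr f v
  else
    ENNReal.ofReal (t ^ (-(1 / U))) *
      (∫⁻ v in Set.Ioo (0 : ℝ) t,
          (ENNReal.ofReal (v ^ (1 / U)) * rearr f v) ^ W.toReal / ENNReal.ofReal v) ^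
        (1 / W.toReal)

/-! The lower bound holds pointwise: `f^*` is non-increasing, so `H^{(U,W)} f (t)` dominates a
fixed multiple of `f^*(t)`.

For the upper bound pick `U < V < p < p_E`. Writing `v^{1/U} = v^{1/U - 1/V} v^{1/V}` gives
`H^{(U,W)} f ≤ K · H^{(V,∞)} f` for `W < ∞`. Splitting `(0, t)` into the pieces
`[a^{k+1} t, a^k t)` for a small `a ∈ (0,1)` bounds `H^{(V,∞)} f (t)` by
`∑ₖ a^{k/V} f^*(a^{k+1} t)`. By the definition of `p_E`, the dilation `D_{a^{k+1}}` has norm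
`≲ a^{-(k+1)/p}`, and the quasi-triangle inequality for the series costs `C_E^{k+1}`; the `k`-th
term is thus `≲ (C_E a^{1/V - 1/p})^k ρ_E(f^*)`, a convergent geometric series once `a` is
small, since `1/V > 1/p`. -/

open Topology

theorem rearr_antitone (f : ℝ → ℝ) : Antitone (rearr f) :=
  fun _ _ h => sInf_le_sInf fun _ hlam => hlam.trans (ENNReal.ofReal_le_ofReal h)

theorem rearr_comp_mul (f : ℝ → ℝ) {a : ℝ} (ha : 0 < a) (t : ℝ) :
    rearr (fun s => f (a * s)) t = rearr f (a * t) := by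
  have hpre : ∀ lam : ℝ≥0∞, {s : ℝ | 0 < s ∧ lam < ENNReal.ofReal |f (a * s)|}
      = (a * ·) ⁻¹' {u : ℝ | 0 < u ∧ lam < ENNReal.ofReal |f u|} := fun lam => by
    ext s; simp [mul_pos_iff_of_pos_left ha]
  simp only [rearr, hpre, Real.volume_preimage_mul_left ha.ne', abs_inv, abs_of_pos ha,
    ENNReal.ofReal_inv_of_pos ha, ENNReal.ofReal_mul ha.le,
    ENNReal.inv_mul_le_iff (ENNReal.ofReal_pos.2 ha).ne' ENNReal.ofReal_ne_top]

theorem rearr_const_mul (f : ℝ → ℝ) {c : ℝ} (hc : 0 < c) (t : ℝ) :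
    rearr (fun s => c * f s) t = ENNReal.ofReal c * rearr f t := by
  set e := ENNReal.mulLeftOrderIso (ENNReal.ofReal c)
    (ENNReal.isUnit_iff.2 ⟨(ENNReal.ofReal_pos.2 hc).ne', ENNReal.ofReal_ne_top⟩)
  have hlt : ∀ lam x : ℝ≥0∞, lam < ENNReal.ofReal c * x ↔ e.symm lam < x := fun lam x => by
    rw [← e.lt_iff_lt (x := e.symm lam), e.apply_symm_apply]; rfl
  change _ = e (rearr f t)
  rw [rearr, rearr, map_sInf, e.image_eq_preimage_symm]
  congr 1
  ext lam
  simp only [hlt, mem_ofPred_eq, mem_preimage, abs_mul, abs_of_pos hc,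
    ENNReal.ofReal_mul hc.le]

theorem lintegral_Ioo_rpow_div_self {s t : ℝ} (hs : 0 < s) (ht : 0 ≤ t) :
    ∫⁻ v in Ioo 0 t, ENNReal.ofReal (v ^ s) / ENNReal.ofReal v =
      ENNReal.ofReal (t ^ s / s) := by
  have hcongr : EqOn (fun v => ENNReal.ofReal (v ^ s) / ENNReal.ofReal v)
      (fun v => ENNReal.ofReal (v ^ (s - 1))) (Ioo 0 t) := by
    rintro v ⟨hv, -⟩
    dsimp only
    rw [← ENNReal.ofReal_div_of_pos hv, Real.rpow_sub_one hv.ne']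
  rw [setLIntegral_congr_fun measurableSet_Ioo hcongr, ← ofReal_integral_eq_lintegral_ofReal,
    ← integral_Ioc_eq_integral_Ioo, ← intervalIntegral.integral_of_le ht,
    integral_rpow (Or.inl (by linarith)), sub_add_cancel, Real.zero_rpow hs.ne', sub_zero]
  · exact (intervalIntegral.intervalIntegrable_rpow' (by linarith)).1.mono_set
      Ioo_subset_Ioc_self
  · filter_upwards [ae_restrict_mem measurableSet_Ioo] with v hv using Real.rpow_nonneg hv.1.le _

theorem lintegral_Ioo_ofReal_rpow_mul_rpow_div {r w t : ℝ} (hr : 0 < r) (hw : 0 < w)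
    (ht : 0 < t) (X : ℝ≥0∞) :
    (∫⁻ v in Ioo 0 t, (ENNReal.ofReal (v ^ r) * X) ^ w / ENNReal.ofReal v) ^ (1 / w)
      = ENNReal.ofReal (t ^ r * (r * w)⁻¹ ^ (1 / w)) * X := by
  have hpt : EqOn (fun v => (ENNReal.ofReal (v ^ r) * X) ^ w / ENNReal.ofReal v)
      (fun v => X ^ w * (ENNReal.ofReal (v ^ (r * w)) / ENNReal.ofReal v)) (Ioo 0 t) := by
    rintro v ⟨hv, -⟩
    dsimp only
    rw [ENNReal.mul_rpow_of_nonneg _ _ hw.le,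
      ENNReal.ofReal_rpow_of_nonneg (Real.rpow_nonneg hv.le _) hw.le, ← Real.rpow_mul hv.le,
      mul_comm (ENNReal.ofReal _), mul_div_assoc]
  rw [setLIntegral_congr_fun measurableSet_Ioo hpt, lintegral_const_mul _ (by fun_prop),
    lintegral_Ioo_rpow_div_self (by positivity) ht.le,
    ENNReal.mul_rpow_of_nonneg _ _ (by positivity), ← ENNReal.rpow_mul,
    mul_one_div_cancel hw.ne', ENNReal.rpow_one,
    ENNReal.ofReal_rpow_of_nonneg (by positivity) (by positivity), mul_comm,
    div_eq_mul_inv, Real.mul_rpow (by positivity) (by positivity), ← Real.rpow_mul ht.le,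
    mul_assoc, mul_one_div_cancel hw.ne', mul_one]

theorem exists_mul_rpow_lt_one (C : ℝ) {ε : ℝ} (hε : 0 < ε) :
    ∃ a : ℝ, 0 < a ∧ a < 1 ∧ C * a ^ ε < 1 := by
  have hlim : Tendsto (fun a : ℝ => C * a ^ ε) (𝓝[>] 0) (𝓝 0) := by
    simpa [Real.zero_rpow hε.ne'] using
      ((Real.continuousAt_rpow_const 0 ε (Or.inr hε.le)).tendsto.const_mul C).mono_left
        nhdsWithin_le_nhds
  obtain ⟨a, ⟨ha0, ha1⟩, hCa⟩ :=
    (Filter.Eventually.and (Ioo_mem_nhdsGT one_pos)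
      (hlim.eventually (gt_mem_nhds one_pos))).exists
  exact ⟨a, ha0, ha1, hCa⟩

theorem ofReal_rpow_neg_mul_ofReal_rpow {t : ℝ} (ht : 0 < t) (r : ℝ) :
    ENNReal.ofReal (t ^ (-r)) * ENNReal.ofReal (t ^ r) = 1 := by
  rw [← ENNReal.ofReal_mul (Real.rpow_nonneg ht.le _), ← Real.rpow_add ht, neg_add_cancel,
    Real.rpow_zero, ENNReal.ofReal_one]

namespace RIQBFS

variable (E : RIQBFS)

theorem C_pos : 0 < E.C := one_pos.trans_le E.one_le_C

theorem ρ_ofReal_mul (x : ℝ) (g : ℝ → ℝ≥0∞) :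
    E.ρ (fun t => ENNReal.ofReal x * g t) = ENNReal.ofReal x * E.ρ g :=
  E.smul_eq x.toNNReal g

theorem ρ_le_ρ_of_forall_pos {f g : ℝ → ℝ≥0∞} (h : ∀ t, 0 < t → g t ≤ f t) : E.ρ g ≤ E.ρ f :=
  E.mono f g (ae_restrict_of_forall_mem measurableSet_Ioi h)

theorem ρ_sum_range_le (h : ℕ → ℝ → ℝ≥0∞) (n : ℕ) :
    E.ρ (fun t => ∑ k ∈ Finset.range n, h k t)
      ≤ ∑ k ∈ Finset.range n, ENNReal.ofReal E.C ^ (k + 1) * E.ρ (h k) := by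
  induction n generalizing h with
  | zero => simpa using (E.eq_zero_iff fun _ => 0).2 (by rfl)
  | succ n ih =>
    simp only [Finset.sum_range_succ' _ n]
    calc E.ρ (fun t => ∑ k ∈ Finset.range n, h (k + 1) t + h 0 t)
        ≤ ENNReal.ofReal E.C *
            (E.ρ (fun t => ∑ k ∈ Finset.range n, h (k + 1) t) + E.ρ (h 0)) :=
          E.quasi_triangle _ _
      _ ≤ ENNReal.ofReal E.C *
            (∑ k ∈ Finset.range n, ENNReal.ofReal E.C ^ (k + 1) * E.ρ (h (k + 1)) +
              E.ρ (h 0)) := by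
          gcongr; exact ih _
      _ = _ := by
          simp only [mul_add, Finset.mul_sum, pow_succ', mul_assoc, zero_add, pow_zero, one_mul]

theorem ρ_tsum_le (h : ℕ → ℝ → ℝ≥0∞) :
    E.ρ (fun t => ∑' k, h k t) ≤ ∑' k, ENNReal.ofReal E.C ^ (k + 1) * E.ρ (h k) := by
  have hmono : ∀ n, ∀ᵐ t ∂(volume.restrict (Ioi (0 : ℝ))),
      ∑ k ∈ Finset.range n, h k t ≤ ∑ k ∈ Finset.range (n + 1), h k t := fun n =>
    .of_forall fun t => Finset.sum_le_sum_of_subset (Finset.range_subset_range.2 n.le_succ)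
  have hlim := E.fatou _ _ hmono (.of_forall fun t => ENNReal.tendsto_nat_tsum (h · t))
  exact le_of_tendsto' hlim fun n => (E.ρ_sum_range_le h n).trans (ENNReal.sum_le_tsum _)

theorem rearr_eq_zero_of_ρ_eq_zero {f : ℝ → ℝ} (hf : E.ρ (rearr f) = 0) {t : ℝ} (ht : 0 < t) :
    rearr f t = 0 := by
  have hae : ∀ᵐ s ∂(volume.restrict (Ioo 0 t)), rearr f s = 0 :=
    ae_restrict_of_ae_restrict_of_subset Ioo_subset_Ioi_self ((E.eq_zero_iff _).1 hf)
  have : (ae (volume.restrict (Ioo 0 t))).NeBot := ae_neBot.2 (by simp [ht])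
  obtain ⟨s, hs0, hs⟩ := (hae.and (ae_restrict_mem measurableSet_Ioo)).exists
  exact le_antisymm (hs0 ▸ rearr_antitone f hs.2.le) zero_le

theorem le_dilNorm {f : ℝ → ℝ} (hf : Measurable f) (h : E.normE f ≤ 1) (a : ℝ) :
    E.normE (fun t => f (a * t)) ≤ dilNorm E a :=
  le_iSup₂_of_le f hf (le_iSup_of_le h le_rfl)

theorem normE_const_mul (f : ℝ → ℝ) {c : ℝ} (hc : 0 < c) :
    E.normE (fun s => c * f s) = ENNReal.ofReal c * E.normE f := by
  rw [normE, normE, funext (rearr_const_mul f hc)]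
  exact E.ρ_ofReal_mul _ _

theorem normE_comp_mul_le {f : ℝ → ℝ} (hf : Measurable f) {a : ℝ} (ha : 0 < a) {K : ℝ≥0∞}
    (hK : dilNorm E a ≤ K) (hK0 : K ≠ 0) :
    E.normE (fun t => f (a * t)) ≤ K * E.normE f := by
  rcases eq_or_ne (E.normE f) 0 with h0 | h0
  · refine le_of_eq_of_le ((E.eq_zero_iff _).2 ?_) zero_le
    filter_upwards [ae_restrict_mem measurableSet_Ioi] with t ht
    rw [rearr_comp_mul f ha]
    exact E.rearr_eq_zero_of_ρ_eq_zero h0 (mul_pos ha ht)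
  rcases eq_or_ne (E.normE f) ⊤ with htop | htop
  · simp [htop, ENNReal.mul_top hK0]
  have hc : 0 < (E.normE f).toReal⁻¹ := inv_pos.2 (ENNReal.toReal_pos h0 htop)
  have hinv : ENNReal.ofReal (E.normE f).toReal⁻¹ = (E.normE f)⁻¹ := by
    rw [ENNReal.ofReal_inv_of_pos (ENNReal.toReal_pos h0 htop), ENNReal.ofReal_toReal htop]
  have hnorm : E.normE (fun s => (E.normE f).toReal⁻¹ * f s) ≤ 1 := by
    rw [E.normE_const_mul f hc, hinv, ENNReal.inv_mul_cancel h0 htop]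
  have := (E.le_dilNorm (hf.const_mul _) hnorm a).trans hK
  rwa [E.normE_const_mul _ hc, hinv, ENNReal.inv_mul_le_iff h0 htop, mul_comm] at this

end RIQBFS

theorem exists_dilNorm_le_of_lt_lowerBoyd {E : RIQBFS} {U : ℝ}
    (h : ENNReal.ofReal U < lowerBoyd E) :
    ∃ p c : ℝ, U < p ∧ 0 < c ∧
      ∀ a : ℝ, 0 < a → a < 1 → dilNorm E a ≤ ENNReal.ofReal (c * a ^ (-(1 / p))) := by
  obtain ⟨_, ⟨p, ⟨hp, c, hc, hdil⟩, rfl⟩, hUp⟩ := lt_sSup_iff.1 h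
  exact ⟨p, c, (ENNReal.ofReal_lt_ofReal_iff hp).1 hUp, hc, hdil⟩

def rearrGeomSum (f : ℝ → ℝ) (a α t : ℝ) : ℝ≥0∞ :=
  ∑' k : ℕ, ENNReal.ofReal ((a ^ k) ^ α) * rearr f (a ^ (k + 1) * t)

theorem avgH_top_le_rearrGeomSum (f : ℝ → ℝ) {V a t : ℝ} (hV : 0 < V) (ha0 : 0 < a)
    (ha1 : a < 1) (ht : 0 < t) :
    avgH V ⊤ f t ≤ rearrGeomSum f a (1 / V) t := by
  have hsup : ∀ v ∈ Ioo 0 t, ENNReal.ofReal (v ^ (1 / V)) * rearr f v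
      ≤ ENNReal.ofReal (t ^ (1 / V)) * rearrGeomSum f a (1 / V) t := by
    rintro v ⟨hv0, hvt⟩
    obtain ⟨k, hk1, hk2⟩ := exists_nat_pow_near_of_lt_one (div_pos hv0 ht)
      ((div_le_one ht).2 hvt.le) ha0 ha1
    rw [lt_div_iff₀ ht] at hk1
    rw [div_le_iff₀ ht] at hk2
    calc ENNReal.ofReal (v ^ (1 / V)) * rearr f v
        ≤ ENNReal.ofReal ((a ^ k * t) ^ (1 / V)) * rearr f (a ^ (k + 1) * t) :=
          mul_le_mul' (ENNReal.ofReal_le_ofReal (by gcongr)) (rearr_antitone f hk1.le)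
      _ = ENNReal.ofReal (t ^ (1 / V)) *
            (ENNReal.ofReal ((a ^ k) ^ (1 / V)) * rearr f (a ^ (k + 1) * t)) := by
          rw [Real.mul_rpow (by positivity) ht.le, ENNReal.ofReal_mul (by positivity)]
          ring
      _ ≤ ENNReal.ofReal (t ^ (1 / V)) * rearrGeomSum f a (1 / V) t := by
          gcongr
          exact ENNReal.le_tsum k
  rw [avgH, if_pos rfl]
  calc ENNReal.ofReal (t ^ (-(1 / V))) *
        ⨆ v ∈ Ioo 0 t, ENNReal.ofReal (v ^ (1 / V)) * rearr f v
      ≤ ENNReal.ofReal (t ^ (-(1 / V))) *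
          (ENNReal.ofReal (t ^ (1 / V)) * rearrGeomSum f a (1 / V) t) := by
        gcongr
        exact iSup₂_le hsup
    _ = rearrGeomSum f a (1 / V) t := by
        rw [← mul_assoc, ofReal_rpow_neg_mul_ofReal_rpow ht, one_mul]

theorem avgH_le_avgH_top (f : ℝ → ℝ) {U V : ℝ} (hU : 0 < U) (hUV : U < V) {W : ℝ≥0∞}
    (hW0 : 0 < W) (hW : W ≠ ⊤) {t : ℝ} (ht : 0 < t) :
    avgH U W f t ≤
      ENNReal.ofReal (((1 / U - 1 / V) * W.toReal)⁻¹ ^ (1 / W.toReal)) * avgH V ⊤ f t := by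
  set w := W.toReal
  set ε := 1 / U - 1 / V
  set S := ⨆ v ∈ Ioo 0 t, ENNReal.ofReal (v ^ (1 / V)) * rearr f v
  have hw : 0 < w := ENNReal.toReal_pos hW0.ne' hW
  have hε : 0 < ε := sub_pos.2 (one_div_lt_one_div_of_lt hU hUV)
  have hle : ∀ v ∈ Ioo 0 t, (ENNReal.ofReal (v ^ (1 / U)) * rearr f v) ^ w / ENNReal.ofReal v
      ≤ (ENNReal.ofReal (v ^ ε) * S) ^ w / ENNReal.ofReal v := by
    intro v hv
    have hsplit : v ^ (1 / U) = v ^ ε * v ^ (1 / V) := by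
      rw [← Real.rpow_add hv.1, sub_add_cancel]
    refine ENNReal.div_le_div_right (ENNReal.rpow_le_rpow ?_ hw.le) _
    rw [hsplit, ENNReal.ofReal_mul (Real.rpow_nonneg hv.1.le _), mul_assoc]
    exact mul_le_mul_right
      (le_biSup (fun v => ENNReal.ofReal (v ^ (1 / V)) * rearr f v) hv) _
  rw [avgH, avgH, if_neg hW, if_pos rfl]
  calc ENNReal.ofReal (t ^ (-(1 / U))) *
        (∫⁻ v in Ioo 0 t, (ENNReal.ofReal (v ^ (1 / U)) * rearr f v) ^ w /
          ENNReal.ofReal v) ^ (1 / w)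
      ≤ ENNReal.ofReal (t ^ (-(1 / U))) *
          (∫⁻ v in Ioo 0 t, (ENNReal.ofReal (v ^ ε) * S) ^ w / ENNReal.ofReal v) ^ (1 / w) :=
        mul_le_mul_right (ENNReal.rpow_le_rpow (setLIntegral_mono' measurableSet_Ioo hle)
          (by positivity)) _
    _ = ENNReal.ofReal (t ^ (-(1 / U)) * t ^ ε * (ε * w)⁻¹ ^ (1 / w)) * S := by
        rw [lintegral_Ioo_ofReal_rpow_mul_rpow_div hε hw ht,
          ENNReal.ofReal_mul (by positivity), ENNReal.ofReal_mul (by positivity),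
          ENNReal.ofReal_mul (by positivity), mul_assoc, mul_assoc, mul_assoc]
    _ = ENNReal.ofReal ((ε * w)⁻¹ ^ (1 / w)) * (ENNReal.ofReal (t ^ (-(1 / V))) * S) := by
        rw [← Real.rpow_add ht, show -(1 / U) + ε = -(1 / V) by ring, mul_comm,
          ENNReal.ofReal_mul (by positivity), mul_comm, mul_assoc, mul_left_comm]

theorem ofReal_mul_rearr_le_avgH_top (f : ℝ → ℝ) (U : ℝ) {t : ℝ} (ht : 0 < t) :
    ENNReal.ofReal ((1 / 2) ^ (1 / U)) * rearr f t ≤ avgH U ⊤ f t := by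
  have hmem : t / 2 ∈ Ioo 0 t := ⟨by positivity, by linarith⟩
  rw [avgH, if_pos rfl]
  calc ENNReal.ofReal ((1 / 2) ^ (1 / U)) * rearr f t
      = ENNReal.ofReal (t ^ (-(1 / U))) * (ENNReal.ofReal ((t / 2) ^ (1 / U)) * rearr f t) := by
        rw [← mul_assoc, ← ENNReal.ofReal_mul (by positivity), div_eq_mul_one_div t,
          Real.mul_rpow ht.le (by norm_num), ← mul_assoc, ← Real.rpow_add ht, neg_add_cancel,
          Real.rpow_zero, one_mul]
    _ ≤ ENNReal.ofReal (t ^ (-(1 / U))) *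
          ⨆ v ∈ Ioo 0 t, ENNReal.ofReal (v ^ (1 / U)) * rearr f v := by
        gcongr
        refine le_trans ?_ (le_biSup (fun v => ENNReal.ofReal (v ^ (1 / U)) * rearr f v) hmem)
        exact mul_le_mul_right (rearr_antitone f hmem.2.le) _

theorem ofReal_mul_rearr_le_avgH (f : ℝ → ℝ) {U : ℝ} (hU : 0 < U) {W : ℝ≥0∞} (hW0 : 0 < W)
    (hW : W ≠ ⊤) {t : ℝ} (ht : 0 < t) :
    ENNReal.ofReal ((1 / U * W.toReal)⁻¹ ^ (1 / W.toReal)) * rearr f t ≤ avgH U W f t := by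
  set w := W.toReal
  have hw : 0 < w := ENNReal.toReal_pos hW0.ne' hW
  have hle : ∀ v ∈ Ioo 0 t, (ENNReal.ofReal (v ^ (1 / U)) * rearr f t) ^ w / ENNReal.ofReal v
      ≤ (ENNReal.ofReal (v ^ (1 / U)) * rearr f v) ^ w / ENNReal.ofReal v := fun v hv => by
    gcongr
    exact rearr_antitone f hv.2.le
  rw [avgH, if_neg hW]
  calc ENNReal.ofReal ((1 / U * w)⁻¹ ^ (1 / w)) * rearr f t
      = ENNReal.ofReal (t ^ (-(1 / U))) *
          (ENNReal.ofReal (t ^ (1 / U) * (1 / U * w)⁻¹ ^ (1 / w)) * rearr f t) := by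
        rw [ENNReal.ofReal_mul (by positivity), ← mul_assoc, ← mul_assoc,
          ofReal_rpow_neg_mul_ofReal_rpow ht, one_mul]
    _ ≤ ENNReal.ofReal (t ^ (-(1 / U))) *
          (∫⁻ v in Ioo 0 t, (ENNReal.ofReal (v ^ (1 / U)) * rearr f v) ^ w /
            ENNReal.ofReal v) ^ (1 / w) := by
        rw [← lintegral_Ioo_ofReal_rpow_mul_rpow_div (by positivity) hw ht]
        exact mul_le_mul_right (ENNReal.rpow_le_rpow (setLIntegral_mono' measurableSet_Ioo hle)
          (by positivity)) _

namespace RIQBFS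

variable (E : RIQBFS)

theorem ρ_rearrGeomSum_le {p c : ℝ} (hc : 0 < c)
    (hdil : ∀ a : ℝ, 0 < a → a < 1 → dilNorm E a ≤ ENNReal.ofReal (c * a ^ (-(1 / p))))
    {f : ℝ → ℝ} (hf : Measurable f) {a α : ℝ} (ha0 : 0 < a) (ha1 : a < 1)
    (hr : E.C * a ^ (α - 1 / p) < 1) :
    E.ρ (rearrGeomSum f a α) ≤
      ENNReal.ofReal (c * E.C * a ^ (-(1 / p)) / (1 - E.C * a ^ (α - 1 / p))) *
        E.ρ (rearr f) := by
  have hC := E.C_pos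
  set r := E.C * a ^ (α - 1 / p) with hr_def
  have hr0 : 0 ≤ r := by positivity
  have hcoeff : ∀ k : ℕ, E.C ^ (k + 1) * (a ^ k) ^ α * (c * (a ^ (k + 1)) ^ (-(1 / p)))
      = c * E.C * a ^ (-(1 / p)) * r ^ k := fun k => by
    rw [hr_def, sub_eq_add_neg, Real.rpow_add ha0, ← Real.rpow_pow_comm ha0.le,
      ← Real.rpow_pow_comm ha0.le]
    ring
  have hterm : ∀ k : ℕ, ENNReal.ofReal E.C ^ (k + 1) *
      E.ρ (fun t => ENNReal.ofReal ((a ^ k) ^ α) * rearr f (a ^ (k + 1) * t))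
        ≤ ENNReal.ofReal (c * E.C * a ^ (-(1 / p)) * r ^ k) * E.ρ (rearr f) := by
    intro k
    have hak : 0 < a ^ (k + 1) := pow_pos ha0 _
    have hD := E.normE_comp_mul_le hf hak (hdil _ hak (pow_lt_one₀ ha0.le ha1 k.succ_ne_zero))
      (by simp only [ne_eq, ENNReal.ofReal_eq_zero, not_le]; positivity)
    simp only [normE, funext (rearr_comp_mul f hak)] at hD
    rw [E.ρ_ofReal_mul, ← hcoeff, ENNReal.ofReal_mul (by positivity),
      ENNReal.ofReal_mul (by positivity), ENNReal.ofReal_pow hC.le, mul_assoc, mul_assoc]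
    gcongr
  calc E.ρ (rearrGeomSum f a α)
      ≤ ∑' k : ℕ, ENNReal.ofReal E.C ^ (k + 1) *
          E.ρ (fun t => ENNReal.ofReal ((a ^ k) ^ α) * rearr f (a ^ (k + 1) * t)) :=
        E.ρ_tsum_le _
    _ ≤ ∑' k : ℕ, ENNReal.ofReal (c * E.C * a ^ (-(1 / p)) * r ^ k) * E.ρ (rearr f) :=
        ENNReal.tsum_le_tsum hterm
    _ = _ := by
        rw [ENNReal.tsum_mul_right, ← ENNReal.ofReal_tsum_of_nonneg (fun k => by positivity)
          ((summable_geometric_of_lt_one hr0 hr).mul_left _), tsum_mul_left,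
          tsum_geometric_of_lt_one hr0 hr, ← div_eq_mul_inv]

theorem exists_ρ_avgH_top_le {V : ℝ} (hV : 0 < V) (hVE : ENNReal.ofReal V < lowerBoyd E) :
    ∃ C : ℝ, 0 < C ∧ ∀ f : ℝ → ℝ, Measurable f →
      E.ρ (avgH V ⊤ f) ≤ ENNReal.ofReal C * E.ρ (rearr f) := by
  obtain ⟨p, c, hVp, hc, hdil⟩ := exists_dilNorm_le_of_lt_lowerBoyd hVE
  obtain ⟨a, ha0, ha1, hr⟩ :=
    exists_mul_rpow_lt_one E.C (sub_pos.2 (one_div_lt_one_div_of_lt hV hVp))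
  have hC := E.C_pos
  refine ⟨c * E.C * a ^ (-(1 / p)) / (1 - E.C * a ^ (1 / V - 1 / p)),
    div_pos (by positivity) (sub_pos.2 hr), fun f hf => ?_⟩
  calc E.ρ (avgH V ⊤ f) ≤ E.ρ (rearrGeomSum f a (1 / V)) :=
        E.ρ_le_ρ_of_forall_pos fun t ht => avgH_top_le_rearrGeomSum f hV ha0 ha1 ht
    _ ≤ _ := E.ρ_rearrGeomSum_le hc hdil hf ha0 ha1 hr

theorem exists_ρ_avgH_le {U : ℝ} (hU : 0 < U) (hUE : ENNReal.ofReal U < lowerBoyd E)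
    {W : ℝ≥0∞} (hW0 : 0 < W) :
    ∃ C : ℝ, 0 < C ∧ ∀ f : ℝ → ℝ, Measurable f →
      E.ρ (avgH U W f) ≤ ENNReal.ofReal C * E.ρ (rearr f) := by
  rcases eq_or_ne W ⊤ with rfl | hW
  · exact E.exists_ρ_avgH_top_le hU hUE
  obtain ⟨V, -, hUV, hVE⟩ := ENNReal.lt_iff_exists_real_btwn.1 hUE
  replace hUV : U < V := (ENNReal.ofReal_lt_ofReal_iff'.1 hUV).1
  obtain ⟨C, hC, hCV⟩ := E.exists_ρ_avgH_top_le (hU.trans hUV) hVE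
  set K := ((1 / U - 1 / V) * W.toReal)⁻¹ ^ (1 / W.toReal)
  have hK : 0 < K := Real.rpow_pos_of_pos (inv_pos.2 (mul_pos
    (sub_pos.2 (one_div_lt_one_div_of_lt hU hUV)) (ENNReal.toReal_pos hW0.ne' hW))) _
  refine ⟨K * C, mul_pos hK hC, fun f hf => ?_⟩
  calc E.ρ (avgH U W f) ≤ E.ρ (fun t => ENNReal.ofReal K * avgH V ⊤ f t) :=
        E.ρ_le_ρ_of_forall_pos fun t ht => avgH_le_avgH_top f hU hUV hW0 hW ht
    _ ≤ ENNReal.ofReal (K * C) * E.ρ (rearr f) := by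
        rw [E.ρ_ofReal_mul, ENNReal.ofReal_mul hK.le, mul_assoc]
        exact mul_le_mul_right (hCV f hf) _

theorem exists_ofReal_mul_ρ_rearr_le {U : ℝ} (hU : 0 < U) {W : ℝ≥0∞} (hW0 : 0 < W) :
    ∃ c : ℝ, 0 < c ∧ ∀ f : ℝ → ℝ,
      ENNReal.ofReal c * E.ρ (rearr f) ≤ E.ρ (avgH U W f) := by
  obtain ⟨c, hc, hle⟩ : ∃ c : ℝ, 0 < c ∧ ∀ (f : ℝ → ℝ) (t : ℝ), 0 < t →
      ENNReal.ofReal c * rearr f t ≤ avgH U W f t := by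
    rcases eq_or_ne W ⊤ with rfl | hW
    · exact ⟨_, by positivity, fun f t ht => ofReal_mul_rearr_le_avgH_top f U ht⟩
    · exact ⟨_, Real.rpow_pos_of_pos (inv_pos.2 (mul_pos (one_div_pos.2 hU)
        (ENNReal.toReal_pos hW0.ne' hW))) _,
        fun f t ht => ofReal_mul_rearr_le_avgH f hU hW0 hW ht⟩
  exact ⟨c, hc, fun f => (E.ρ_ofReal_mul c _).symm.trans_le
    (E.ρ_le_ρ_of_forall_pos (hle f))⟩

end RIQBFS

/-- Let `E` be a r.i. quasi-Banach function space on `(0,∞)` with lower Boyd index `p_E`,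
and let `0 < U < p_E` and `0 < W ≤ ∞`. Then there exist constants `c, C > 0` such that for
all measurable `f` on `(0,∞)`: `c ρ_E(f^*) ≤ ρ_E(H^{(U,W)}f) ≤ C ρ_E(f^*)`. -/
theorem stmt3 (E : RIQBFS) (U : ℝ) (hU : 0 < U) (hUE : ENNReal.ofReal U < lowerBoyd E)
    (W : ℝ≥0∞) (hW : 0 < W) :
    ∃ c C : ℝ, 0 < c ∧ 0 < C ∧ ∀ f : ℝ → ℝ, Measurable f →
      ENNReal.ofReal c * E.ρ (rearr f) ≤ E.ρ (avgH U W f) ∧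
        E.ρ (avgH U W f) ≤ ENNReal.ofReal C * E.ρ (rearr f) := by
  obtain ⟨c, hc, hlower⟩ := E.exists_ofReal_mul_ρ_rearr_le hU hW
  obtain ⟨C, hC, hupper⟩ := E.exists_ρ_avgH_le hU hUE hW
  exact ⟨c, C, hc, hC, fun f hf => ⟨hlower f, hupper f hf⟩⟩
end
end
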